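/- Let M be an irreducible generator on a finite set Z with |Z| ≥ 2, let ζ ∈ P_+(Z), let (ζ_n) be a sequence in P_+(Z) with ζ_n(z) → ζ(z) for every z ∈ Z, and let (δ_n) be a sequence of positive reals with δ_n → 0. Then lim_{n→∞} inf { ℛ_{ζ_n}(φ,M)/H_{ζ_n}(φ) : φ ∈ D_{ζ_n}(Z), 0 < ‖φ − 1‖_{ζ_n} < δ_n } = 2 α_gPI(ζ, M). -/

import Mathlib

open Finset Filter

/-- A generator (transition rate matrix) on a finite state space `Z`. -/
def IsGenerator {Z : Type*} [Fintype Z] (M : Z → Z → ℝ) : Prop :=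
  (∀ z z' : Z, z ≠ z' → 0 ≤ M z z') ∧ ∀ z : Z, ∑ z' : Z, M z z' = 0

/-- Irreducibility of a generator. -/
def IsIrreducibleGen {Z : Type*} [Fintype Z] (M : Z → Z → ℝ) : Prop :=
  ∀ z z' : Z, z ≠ z' → ∃ (ℓ : ℕ) (p : ℕ → Z), 1 ≤ ℓ ∧ p 0 = z ∧ p ℓ = z' ∧
    ∀ i : ℕ, 1 ≤ i → i ≤ ℓ → 0 < M (p (i - 1)) (p i)

/-- A probability measure on `Z`. -/
def IsProb {Z : Type*} [Fintype Z] (ζ : Z → ℝ) : Prop :=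
  (∀ z, 0 ≤ ζ z) ∧ ∑ z : Z, ζ z = 1

/-- A strictly positive probability measure on `Z`. -/
def IsPosProb {Z : Type*} [Fintype Z] (ζ : Z → ℝ) : Prop :=
  (∀ z, 0 < ζ z) ∧ ∑ z : Z, ζ z = 1

/-- Expectation of `f` with respect to `ζ`. -/
noncomputable def expec {Z : Type*} [Fintype Z] (ζ f : Z → ℝ) : ℝ := ∑ z : Z, f z * ζ z

/-- Variance of `f` with respect to `ζ`. -/
noncomputable def varWrt {Z : Type*} [Fintype Z] (ζ f : Z → ℝ) : ℝ :=
  expec ζ (fun z => f z ^ 2) - (expec ζ f) ^ 2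

/-- Generalised Dirichlet form with respect to `ζ`. -/
noncomputable def dirichletForm {Z : Type*} [Fintype Z] (ζ f : Z → ℝ) (M : Z → Z → ℝ) : ℝ :=
  (1 / 2) * ∑ z : Z, ∑ z' : Z, M z z' * ζ z * (f z - f z') ^ 2

/-- A (strictly positive) probability density with respect to `ζ`. -/
def IsDensity {Z : Type*} [Fintype Z] (ζ φ : Z → ℝ) : Prop :=
  (∀ z, 0 < φ z) ∧ expec ζ φ = 1

/-- Relative entropy with respect to `ζ`. -/
noncomputable def relEnt {Z : Type*} [Fintype Z] (ζ φ : Z → ℝ) : ℝ :=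
  ∑ z : Z, φ z * Real.log (φ z) * ζ z

/-- Generalised Fisher information with respect to `ζ`. -/
noncomputable def fisherInfo {Z : Type*} [Fintype Z] (ζ φ : Z → ℝ) (M : Z → Z → ℝ) : ℝ :=
  ∑ z : Z, ∑ z' : Z, M z z' * ζ z * φ z * (φ z' / φ z - 1 - Real.log (φ z' / φ z))

/-- `f` is a nonconstant function. -/
def Nonconst {Z : Type*} (f : Z → ℝ) : Prop := ∃ z z' : Z, f z ≠ f z'

/-- Generalised Poincaré constant. -/
noncomputable def gPI {Z : Type*} [Fintype Z] (ζ : Z → ℝ) (M : Z → Z → ℝ) : ℝ :=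
  sInf { r : ℝ | ∃ f : Z → ℝ, Nonconst f ∧ r = dirichletForm ζ f M / varWrt ζ f }

/-- Generalised log-Sobolev constant. -/
noncomputable def gLSI {Z : Type*} [Fintype Z] (ζ : Z → ℝ) (M : Z → Z → ℝ) : ℝ :=
  sInf { r : ℝ | ∃ φ : Z → ℝ, IsDensity ζ φ ∧ φ ≠ (fun _ => 1) ∧
    r = fisherInfo ζ φ M / relEnt ζ φ }

/-- The `ζ`-weighted `L²` norm. -/
noncomputable def wNorm {Z : Type*} [Fintype Z] (ζ g : Z → ℝ) : ℝ :=
  Real.sqrt (∑ z : Z, g z ^ 2 * ζ z)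



section LocGPIAux
open Real Set Finset Filter

lemma one_sub_inv_le_log {x : ℝ} (hx : 0 < x) : 1 - x⁻¹ ≤ Real.log x := by
  have h := Real.log_le_sub_one_of_pos (inv_pos.2 hx)
  rw [Real.log_inv] at h
  linarith

lemma nonneg_of_deriv_Ici (f f' : ℝ → ℝ)
    (hd : ∀ y ∈ Set.Ici (1:ℝ), HasDerivAt f (f' y) y)
    (h1 : f 1 = 0) (hge : ∀ y, 1 ≤ y → 0 ≤ f' y)
    {x : ℝ} (hx : 1 ≤ x) : 0 ≤ f x := by
  have hmono : MonotoneOn f (Set.Ici 1) := by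
    apply monotoneOn_of_deriv_nonneg (convex_Ici 1)
    · exact fun y hy => (hd y hy).differentiableAt.continuousAt.continuousWithinAt
    · intro y hy
      rw [interior_Ici] at hy
      exact (hd y (Set.mem_Ici.2 (le_of_lt hy))).differentiableAt.differentiableWithinAt
    · intro y hy
      rw [interior_Ici] at hy
      rw [(hd y (Set.mem_Ici.2 (le_of_lt hy))).deriv]
      exact hge y (le_of_lt hy)
  have := hmono Set.self_mem_Ici (Set.mem_Ici.2 hx) hx
  linarith

lemma nonneg_of_deriv_Ioc (f f' : ℝ → ℝ)
    (hd : ∀ y ∈ Set.Ioc (0:ℝ) 1, HasDerivAt f (f' y) y)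
    (h1 : f 1 = 0) (hle : ∀ y, 0 < y → y ≤ 1 → f' y ≤ 0)
    {x : ℝ} (hx0 : 0 < x) (hx : x ≤ 1) : 0 ≤ f x := by
  have hanti : AntitoneOn f (Set.Ioc 0 1) := by
    apply antitoneOn_of_deriv_nonpos (convex_Ioc 0 1)
    · exact fun y hy => (hd y hy).differentiableAt.continuousAt.continuousWithinAt
    · intro y hy
      rw [interior_Ioc] at hy
      exact (hd y ⟨hy.1, le_of_lt hy.2⟩).differentiableAt.differentiableWithinAt
    · intro y hy
      rw [interior_Ioc] at hy
      rw [(hd y ⟨hy.1, le_of_lt hy.2⟩).deriv]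
      exact hle y hy.1 (le_of_lt hy.2)
  have := hanti ⟨hx0, hx⟩ ⟨one_pos, le_refl 1⟩ hx
  linarith

/-- derivative of y ↦ (y-1)^2/(2y) is (y^2-1)/(2y^2) -/
lemma hd_q (y : ℝ) (hy : 0 < y) :
    HasDerivAt (fun y : ℝ => (y - 1) ^ 2 / (2 * y)) ((y ^ 2 - 1) / (2 * y ^ 2)) y := by
  have h1 : HasDerivAt (fun y : ℝ => (y - 1) ^ 2) (2 * (y - 1)) y := by
    have := ((hasDerivAt_id y).sub_const 1).fun_pow 2
    simpa using this
  have h2 : HasDerivAt (fun y : ℝ => 2 * y) 2 y := by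
    simpa using (hasDerivAt_id y).const_mul 2
  have h := h1.div h2 (by positivity)
  refine h.congr_deriv ?_
  rw [div_eq_div_iff (by positivity) (by positivity)]
  ring

lemma hd_psi (y : ℝ) (hy : 0 < y) :
    HasDerivAt (fun y : ℝ => y * Real.log y - y + 1) (Real.log y) y := by
  have h := (Real.hasDerivAt_mul_log (ne_of_gt hy)).sub (hasDerivAt_id y)
  have h2 := h.add_const 1
  simpa using h2

lemma B1 {x : ℝ} (hx : 1 ≤ x) : (x - 1) ^ 2 / (2 * x) ≤ x * Real.log x - x + 1 := by
  have h0 : (0:ℝ) < 1 := one_pos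
  have := nonneg_of_deriv_Ici
    (fun y => y * Real.log y - y + 1 - (y - 1) ^ 2 / (2 * y))
    (fun y => Real.log y - (y ^ 2 - 1) / (2 * y ^ 2))
    (fun y hy => ((hd_psi y (lt_of_lt_of_le one_pos hy)).sub (hd_q y (lt_of_lt_of_le one_pos hy))))
    (by norm_num) ?_ hx
  · linarith
  · intro y hy
    have hy0 : (0:ℝ) < y := lt_of_lt_of_le one_pos hy
    have hlog := one_sub_inv_le_log hy0
    have key : (y ^ 2 - 1) / (2 * y ^ 2) ≤ 1 - y⁻¹ := by
      rw [div_le_iff₀ (by positivity)]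
      have hinv : y * y⁻¹ = 1 := mul_inv_cancel₀ (ne_of_gt hy0)
      nlinarith [sq_nonneg (y - 1), sq_nonneg y]
    linarith

lemma B2 {x : ℝ} (hx0 : 0 < x) (hx : x ≤ 1) : (x - 1) ^ 2 / 2 ≤ x * Real.log x - x + 1 := by
  have := nonneg_of_deriv_Ioc
    (fun y => y * Real.log y - y + 1 - (y - 1) ^ 2 / 2)
    (fun y => Real.log y - (y - 1))
    (fun y hy => by
      have h1 := hd_psi y hy.1
      have h2 : HasDerivAt (fun y : ℝ => (y - 1) ^ 2 / 2) (y - 1) y := by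
        have := (((hasDerivAt_id y).sub_const 1).pow 2).div_const 2
        simpa using this
      exact h1.sub h2)
    (by norm_num) ?_ hx0 hx
  · linarith
  · intro y hy0 hy1
    have := Real.log_le_sub_one_of_pos hy0
    linarith

lemma B3 {x : ℝ} (hx : 1 ≤ x) : x * Real.log x - x + 1 ≤ (x - 1) ^ 2 / 2 := by
  have := nonneg_of_deriv_Ici
    (fun y => (y - 1) ^ 2 / 2 - (y * Real.log y - y + 1))
    (fun y => (y - 1) - Real.log y)
    (fun y hy => by
      have h1 := hd_psi y (lt_of_lt_of_le one_pos hy)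
      have h2 : HasDerivAt (fun y : ℝ => (y - 1) ^ 2 / 2) (y - 1) y := by
        have := (((hasDerivAt_id y).sub_const 1).pow 2).div_const 2
        simpa using this
      exact h2.sub h1)
    (by norm_num) ?_ hx
  · linarith
  · intro y hy
    have := Real.log_le_sub_one_of_pos (lt_of_lt_of_le one_pos hy)
    linarith

lemma B4 {x : ℝ} (hx0 : 0 < x) (hx : x ≤ 1) : x * Real.log x - x + 1 ≤ (x - 1) ^ 2 / (2 * x) := by
  have := nonneg_of_deriv_Ioc
    (fun y => (y - 1) ^ 2 / (2 * y) - (y * Real.log y - y + 1))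
    (fun y => (y ^ 2 - 1) / (2 * y ^ 2) - Real.log y)
    (fun y hy => (hd_q y hy.1).sub (hd_psi y hy.1))
    (by norm_num) ?_ hx0 hx
  · linarith
  · intro y hy0 hy1
    have hlog := one_sub_inv_le_log hy0
    have key : (y ^ 2 - 1) / (2 * y ^ 2) ≤ 1 - y⁻¹ := by
      rw [div_le_iff₀ (by positivity)]
      have hinv : y * y⁻¹ = 1 := mul_inv_cancel₀ (ne_of_gt hy0)
      nlinarith [sq_nonneg (y - 1), sq_nonneg y]
    linarith

/-- key substitution: x * ψ(1/x) = ψ̃(x) -/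
lemma subst_eq {x : ℝ} (hx : 0 < x) :
    x * (x⁻¹ * Real.log x⁻¹ - x⁻¹ + 1) = x - 1 - Real.log x := by
  rw [Real.log_inv]
  field_simp
  ring

lemma psi_ge {x c : ℝ} (hx : 0 < x) (hxc : x ≤ c) (hc : 1 ≤ c) :
    (x - 1) ^ 2 / (2 * c) ≤ x * Real.log x - x + 1 := by
  rcases le_or_gt 1 x with h | h
  · refine le_trans ?_ (B1 h)
    apply div_le_div_of_nonneg_left (sq_nonneg _) (by positivity)
    linarith
  · refine le_trans ?_ (B2 hx (le_of_lt h))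
    apply div_le_div_of_nonneg_left (sq_nonneg _) (by norm_num)
    linarith

lemma psi_le {x c : ℝ} (hc : 0 < c) (hcx : c ≤ x) (hc1 : c ≤ 1) :
    x * Real.log x - x + 1 ≤ (x - 1) ^ 2 / (2 * c) := by
  have hx : 0 < x := lt_of_lt_of_le hc hcx
  rcases le_or_gt 1 x with h | h
  · refine le_trans (B3 h) ?_
    apply div_le_div_of_nonneg_left (sq_nonneg _) (by positivity)
    linarith
  · refine le_trans (B4 hx (le_of_lt h)) ?_
    apply div_le_div_of_nonneg_left (sq_nonneg _) (by positivity)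
    linarith

lemma psit_ge {x c : ℝ} (hx : 0 < x) (hxc : x ≤ c) (hc : 1 ≤ c) :
    (x - 1) ^ 2 / (2 * c ^ 2) ≤ x - 1 - Real.log x := by
  have hc0 : (0:ℝ) < c := lt_of_lt_of_le one_pos hc
  rw [← subst_eq hx]
  have hix : 0 < x⁻¹ := inv_pos.2 hx
  rcases le_or_gt 1 x with h | h
  · -- x ≥ 1, use B2 at 1/x ≤ 1 : ψ(1/x) ≥ (1/x-1)^2/2, so xψ(1/x) ≥ (x-1)^2/(2x) ≥ (x-1)^2/(2c^2)
    have hb := B2 hix (by rw [inv_le_one_iff₀]; right; exact h)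
    have h2 : (x - 1) ^ 2 / (2 * x) ≤ x * (x⁻¹ * Real.log x⁻¹ - x⁻¹ + 1) := by
      have := mul_le_mul_of_nonneg_left hb (le_of_lt hx)
      refine le_trans (le_of_eq ?_) this
      field_simp
      ring
    refine le_trans ?_ h2
    apply div_le_div_of_nonneg_left (sq_nonneg _) (by positivity)
    nlinarith
  · -- x ≤ 1 : use B1 at 1/x ≥ 1 : ψ(1/x) ≥ (1/x-1)^2/(2/x); xψ(1/x) ≥ (x-1)^2/2
    have hb := B1 (one_le_inv_iff₀.2 ⟨hx, le_of_lt h⟩)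
    have h2 : (x - 1) ^ 2 / 2 ≤ x * (x⁻¹ * Real.log x⁻¹ - x⁻¹ + 1) := by
      have := mul_le_mul_of_nonneg_left hb (le_of_lt hx)
      refine le_trans (le_of_eq ?_) this
      field_simp
      ring
    refine le_trans ?_ h2
    apply div_le_div_of_nonneg_left (sq_nonneg _) (by norm_num)
    nlinarith

lemma psit_le {x c : ℝ} (hc : 0 < c) (hcx : c ≤ x) (hc1 : c ≤ 1) :
    x - 1 - Real.log x ≤ (x - 1) ^ 2 / (2 * c ^ 2) := by
  have hx : 0 < x := lt_of_lt_of_le hc hcx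
  rw [← subst_eq hx]
  have hix : 0 < x⁻¹ := inv_pos.2 hx
  rcases le_or_gt 1 x with h | h
  · -- x ≥ 1 : B4 at 1/x : ψ(1/x) ≤ (1/x-1)^2/(2/x) ⇒ xψ(1/x) ≤ (x-1)^2/2 ≤ (x-1)^2/(2c^2)
    have hb := B4 hix (by rw [inv_le_one_iff₀]; right; exact h)
    have h2 : x * (x⁻¹ * Real.log x⁻¹ - x⁻¹ + 1) ≤ (x - 1) ^ 2 / 2 := by
      have := mul_le_mul_of_nonneg_left hb (le_of_lt hx)
      refine le_trans this (le_of_eq ?_)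
      field_simp
      ring
    refine le_trans h2 ?_
    apply div_le_div_of_nonneg_left (sq_nonneg _) (by positivity)
    nlinarith
  · -- x ≤ 1 : B3 at 1/x ≥ 1 : ψ(1/x) ≤ (1/x-1)^2/2 ⇒ xψ(1/x) ≤ (x-1)^2/(2x) ≤ (x-1)^2/(2c^2)
    have hb := B3 (one_le_inv_iff₀.2 ⟨hx, le_of_lt h⟩)
    have h2 : x * (x⁻¹ * Real.log x⁻¹ - x⁻¹ + 1) ≤ (x - 1) ^ 2 / (2 * x) := by
      have := mul_le_mul_of_nonneg_left hb (le_of_lt hx)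
      refine le_trans this (le_of_eq ?_)
      field_simp
      ring
    refine le_trans h2 ?_
    apply div_le_div_of_nonneg_left (sq_nonneg _) (by positivity)
    nlinarith

section Sums
variable {Z : Type*} [Fintype Z] (ν ν' f g : Z → ℝ) (M : Z → Z → ℝ)

lemma expec_const (hν : ∑ z : Z, ν z = 1) (c : ℝ) : expec ν (fun _ => c) = c := by
  simp [expec, ← Finset.mul_sum, hν]

lemma expec_affine (hν : ∑ z : Z, ν z = 1) (a t : ℝ) :
    expec ν (fun z => a + t * f z) = a + t * expec ν f := by
  simp only [expec]
  rw [show ∀ (h : True), (∑ z : Z, (a + t * f z) * ν z) = (∑ z : Z, (a * ν z + t * (f z * ν z))) from fun _ => Finset.sum_congr rfl (fun z _ => by ring), Finset.sum_add_distrib, ← Finset.mul_sum, ← Finset.mul_sum, hν]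
  · ring
  · trivial

lemma sqdev_eq (hν : ∑ z : Z, ν z = 1) (c : ℝ) :
    ∑ z : Z, (f z - c) ^ 2 * ν z = varWrt ν f + (expec ν f - c) ^ 2 := by
  have h : ∀ z : Z, (f z - c) ^ 2 * ν z
      = f z ^ 2 * ν z - 2 * c * (f z * ν z) + c ^ 2 * ν z := fun z => by ring
  rw [Finset.sum_congr rfl (fun z _ => h z), Finset.sum_add_distrib, Finset.sum_sub_distrib,
    ← Finset.mul_sum, ← Finset.mul_sum, hν]
  simp only [varWrt, expec]
  ring

lemma varWrt_eq_sqdev (hν : ∑ z : Z, ν z = 1) :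
    varWrt ν f = ∑ z : Z, (f z - expec ν f) ^ 2 * ν z := by
  rw [sqdev_eq ν f hν (expec ν f)]
  simp

lemma varWrt_le_sqdev (hν : ∑ z : Z, ν z = 1) (c : ℝ) :
    varWrt ν f ≤ ∑ z : Z, (f z - c) ^ 2 * ν z := by
  rw [sqdev_eq ν f hν c]
  nlinarith [sq_nonneg (expec ν f - c)]

lemma varWrt_pos (hν : IsPosProb ν) (hf : Nonconst f) : 0 < varWrt ν f := by
  rw [varWrt_eq_sqdev ν f hν.2]
  obtain ⟨z, z', hzz⟩ := hf
  have hne : f z ≠ expec ν f ∨ f z' ≠ expec ν f := by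
    by_contra h
    push_neg at h
    exact hzz (h.1.trans h.2.symm)
  apply Finset.sum_pos'
  · intro i _
    have := (hν.1 i).le
    positivity
  · rcases hne with h | h
    · exact ⟨z, Finset.mem_univ z,
        mul_pos (pow_pos (abs_pos.2 (sub_ne_zero.2 h)) 2 |>.trans_le (by rw [sq_abs])) (hν.1 z)⟩
    · exact ⟨z', Finset.mem_univ z',
        mul_pos (pow_pos (abs_pos.2 (sub_ne_zero.2 h)) 2 |>.trans_le (by rw [sq_abs])) (hν.1 z')⟩

lemma varWrt_zero_of_const (hν : ∑ z : Z, ν z = 1) (hf : ¬ Nonconst f) : varWrt ν f = 0 := by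
  simp only [Nonconst, not_exists, not_not, ne_eq] at hf
  have hZ : Nonempty Z := by
    by_contra h
    rw [not_nonempty_iff] at h
    simp [Finset.sum_of_isEmpty] at hν
  obtain ⟨z₀⟩ := hZ
  have hfz : ∀ z, f z = f z₀ := fun z => hf z z₀
  have he : expec ν f = f z₀ := by
    rw [show f = (fun _ => f z₀) from funext hfz]
    exact expec_const ν hν _
  rw [varWrt, he, show (fun z => f z ^ 2) = (fun _ : Z => f z₀ ^ 2) from funext (fun z => by rw [hfz z])]
  rw [expec_const ν hν]
  ring

lemma varWrt_affine (hν : ∑ z : Z, ν z = 1) (a t : ℝ) :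
    varWrt ν (fun z => a + t * f z) = t ^ 2 * varWrt ν f := by
  simp only [varWrt]
  rw [expec_affine ν f hν a t]
  have h : expec ν (fun z => (a + t * f z) ^ 2)
      = a ^ 2 + 2 * a * t * expec ν f + t ^ 2 * expec ν (fun z => f z ^ 2) := by
    simp only [expec]
    rw [show (∑ z : Z, (a + t * f z) ^ 2 * ν z)
      = ∑ z : Z, (a ^ 2 * ν z + 2 * a * t * (f z * ν z) + t ^ 2 * (f z ^ 2 * ν z)) from
      Finset.sum_congr rfl (fun z _ => by ring)]
    rw [Finset.sum_add_distrib, Finset.sum_add_distrib, ← Finset.mul_sum, ← Finset.mul_sum,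
      ← Finset.mul_sum, hν]
    ring
  rw [h]
  ring

end Sums

section Dirichlet
variable {Z : Type*} [Fintype Z] (ν ν' f : Z → ℝ) (M : Z → Z → ℝ)

lemma dirichlet_term_nonneg (hM : IsGenerator M) (hν : ∀ z, 0 ≤ ν z) (z z' : Z) :
    0 ≤ M z z' * ν z * (f z - f z') ^ 2 := by
  by_cases h : z = z'
  · subst h; simp
  · exact mul_nonneg (mul_nonneg (hM.1 z z' h) (hν z)) (sq_nonneg _)

lemma dirichlet_nonneg (hM : IsGenerator M) (hν : ∀ z, 0 ≤ ν z) :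
    0 ≤ dirichletForm ν f M := by
  apply mul_nonneg (by norm_num)
  exact Finset.sum_nonneg fun z _ => Finset.sum_nonneg fun z' _ =>
    dirichlet_term_nonneg ν f M hM hν z z'

lemma dirichlet_mono (hM : IsGenerator M) (hle : ∀ z, ν z ≤ ν' z) :
    dirichletForm ν f M ≤ dirichletForm ν' f M := by
  apply mul_le_mul_of_nonneg_left _ (by norm_num : (0:ℝ) ≤ 1/2)
  apply Finset.sum_le_sum
  intro z _
  apply Finset.sum_le_sum
  intro z' _
  by_cases h : z = z'
  · subst h; simp
  · have hM' := hM.1 z z' h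
    exact mul_le_mul_of_nonneg_right (mul_le_mul_of_nonneg_left (hle z) hM') (sq_nonneg _)

lemma dirichlet_scale (C : ℝ) :
    dirichletForm (fun z => C * ν z) f M = C * dirichletForm ν f M := by
  simp only [dirichletForm, Finset.mul_sum]
  apply Finset.sum_congr rfl
  intro z _
  apply Finset.sum_congr rfl
  intro z' _
  ring

lemma dirichlet_affine (a t : ℝ) :
    dirichletForm ν (fun z => a + t * f z) M = t ^ 2 * dirichletForm ν f M := by
  simp only [dirichletForm, Finset.mul_sum]
  apply Finset.sum_congr rfl
  intro z _
  apply Finset.sum_congr rfl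
  intro z' _
  ring

end Dirichlet

section WNorm
variable {Z : Type*} [Fintype Z] (ν g : Z → ℝ)

lemma wNorm_sq (hν : ∀ z, 0 ≤ ν z) : wNorm ν g ^ 2 = ∑ z : Z, g z ^ 2 * ν z := by
  rw [wNorm, Real.sq_sqrt]
  exact Finset.sum_nonneg fun z _ => mul_nonneg (sq_nonneg _) (hν z)

lemma wNorm_nonneg : 0 ≤ wNorm ν g := Real.sqrt_nonneg _

lemma abs_le_wNorm (hν : ∀ z, 0 ≤ ν z) (z : Z) :
    |g z| * Real.sqrt (ν z) ≤ wNorm ν g := by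
  rw [← Real.sqrt_sq_eq_abs, ← Real.sqrt_mul (sq_nonneg _)]
  apply Real.sqrt_le_sqrt
  exact Finset.single_le_sum (fun i _ => mul_nonneg (sq_nonneg _) (hν i)) (Finset.mem_univ z)

lemma wNorm_scale (t : ℝ) : wNorm ν (fun z => t * g z) = |t| * wNorm ν g := by
  simp only [wNorm, mul_pow]
  rw [show (∑ z : Z, t ^ 2 * g z ^ 2 * ν z) = t ^ 2 * ∑ z : Z, g z ^ 2 * ν z by
    rw [Finset.mul_sum]; exact Finset.sum_congr rfl fun z _ => by ring]
  rw [Real.sqrt_mul (sq_nonneg t), Real.sqrt_sq_eq_abs]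

end WNorm

section Bounds
variable {Z : Type*} [Fintype Z] (ν φ : Z → ℝ) (M : Z → Z → ℝ)

lemma var_eq_sq_sum (hν : ∑ z : Z, ν z = 1) (hφ : expec ν φ = 1) :
    ∑ z : Z, (φ z - 1) ^ 2 * ν z = varWrt ν φ := by
  rw [sqdev_eq ν φ hν 1, hφ]
  simp

lemma relEnt_eq_psi (hν : ∑ z : Z, ν z = 1) (hφ : expec ν φ = 1) :
    relEnt ν φ = ∑ z : Z, (φ z * Real.log (φ z) - φ z + 1) * ν z := by
  have h : ∀ z : Z, (φ z * Real.log (φ z) - φ z + 1) * ν z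
      = φ z * Real.log (φ z) * ν z - φ z * ν z + ν z := fun z => by ring
  rw [Finset.sum_congr rfl (fun z _ => h z), Finset.sum_add_distrib, Finset.sum_sub_distrib, hν]
  have : ∑ z : Z, φ z * ν z = 1 := hφ
  rw [this]
  simp [relEnt]

lemma relEnt_bounds (hν : IsPosProb ν) (hφ : IsDensity ν φ) {a : ℝ}
    (ha0 : 0 ≤ a) (ha1 : a < 1) (hbd : ∀ z, |φ z - 1| ≤ a) :
    varWrt ν φ / (2 * (1 + a)) ≤ relEnt ν φ ∧ relEnt ν φ ≤ varWrt ν φ / (2 * (1 - a)) := by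
  have hV := var_eq_sq_sum ν φ hν.2 hφ.2
  rw [relEnt_eq_psi ν φ hν.2 hφ.2]
  have hlo : ∀ z : Z, 1 - a ≤ φ z := fun z => by have := abs_le.1 (hbd z); linarith [this.1]
  have hhi : ∀ z : Z, φ z ≤ 1 + a := fun z => by have := abs_le.1 (hbd z); linarith [(abs_le.1 (hbd z)).2]
  constructor
  · rw [← hV, Finset.sum_div]
    apply Finset.sum_le_sum
    intro z _
    calc (φ z - 1) ^ 2 * ν z / (2 * (1 + a))
        = ((φ z - 1) ^ 2 / (2 * (1 + a))) * ν z := by ring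
      _ ≤ (φ z * Real.log (φ z) - φ z + 1) * ν z :=
          mul_le_mul_of_nonneg_right (psi_ge (hφ.1 z) (hhi z) (by linarith)) (hν.1 z).le
  · rw [← hV, Finset.sum_div]
    apply Finset.sum_le_sum
    intro z _
    calc (φ z * Real.log (φ z) - φ z + 1) * ν z
        ≤ ((φ z - 1) ^ 2 / (2 * (1 - a))) * ν z :=
          mul_le_mul_of_nonneg_right (psi_le (by linarith) (hlo z) (by linarith)) (hν.1 z).le
      _ = (φ z - 1) ^ 2 * ν z / (2 * (1 - a)) := by ring

lemma fisher_bounds (hM : IsGenerator M) (hν : IsPosProb ν) (hφp : ∀ z, 0 < φ z) {a : ℝ}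
    (ha0 : 0 ≤ a) (ha1 : a < 1) (hbd : ∀ z, |φ z - 1| ≤ a) :
    ((1 - a) ^ 2 / (1 + a) ^ 3) * dirichletForm ν φ M ≤ fisherInfo ν φ M ∧
    fisherInfo ν φ M ≤ ((1 + a) ^ 2 / (1 - a) ^ 3) * dirichletForm ν φ M := by
  have hlo : ∀ z : Z, 1 - a ≤ φ z := fun z => by linarith [(abs_le.1 (hbd z)).1]
  have hhi : ∀ z : Z, φ z ≤ 1 + a := fun z => by linarith [(abs_le.1 (hbd z)).2]
  have h1a : (0:ℝ) < 1 - a := by linarith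
  have h1a' : (0:ℝ) < 1 + a := by linarith
  -- ratio bounds
  have hrat_hi : ∀ z z' : Z, φ z' / φ z ≤ (1 + a) / (1 - a) := fun z z' =>
    div_le_div₀ (le_of_lt h1a') (hhi z') h1a (hlo z)
  have hrat_lo : ∀ z z' : Z, (1 - a) / (1 + a) ≤ φ z' / φ z := fun z z' =>
    div_le_div₀ (hφp z').le (hlo z') (hφp z) (hhi z)
  -- core pointwise bounds: for all z z',
  have core_lo : ∀ z z' : Z, ((1 - a) ^ 2 / (1 + a) ^ 3 / 2) * (φ z - φ z') ^ 2
      ≤ φ z * (φ z' / φ z - 1 - Real.log (φ z' / φ z)) := by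
    intro z z'
    have hp := hφp z
    have hq := hφp z'
    have h1 := psit_ge (div_pos hq hp) (hrat_hi z z') (by rw [le_div_iff₀ h1a]; linarith)
    have h2 := mul_le_mul_of_nonneg_left h1 hp.le
    refine le_trans ?_ h2
    have e : φ z * ((φ z' / φ z - 1) ^ 2 / (2 * ((1 + a) / (1 - a)) ^ 2))
        = (φ z - φ z') ^ 2 * ((1 - a) ^ 2 / (2 * (φ z) * (1 + a) ^ 2)) := by
      field_simp
      ring
    rw [e]
    have hcoef : (1 - a) ^ 2 / (1 + a) ^ 3 / 2 ≤ (1 - a) ^ 2 / (2 * φ z * (1 + a) ^ 2) := by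
      rw [div_div]
      apply div_le_div_of_nonneg_left (sq_nonneg _)
        (mul_pos (mul_pos two_pos hp) (pow_pos h1a' 2))
      nlinarith [hhi z, pow_pos h1a' 2]
    calc (1 - a) ^ 2 / (1 + a) ^ 3 / 2 * (φ z - φ z') ^ 2
        ≤ ((1 - a) ^ 2 / (2 * φ z * (1 + a) ^ 2)) * (φ z - φ z') ^ 2 :=
          mul_le_mul_of_nonneg_right hcoef (sq_nonneg _)
      _ = (φ z - φ z') ^ 2 * ((1 - a) ^ 2 / (2 * φ z * (1 + a) ^ 2)) := by ring
  have core_hi : ∀ z z' : Z, φ z * (φ z' / φ z - 1 - Real.log (φ z' / φ z))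
      ≤ ((1 + a) ^ 2 / (1 - a) ^ 3 / 2) * (φ z - φ z') ^ 2 := by
    intro z z'
    have hp := hφp z
    have hq := hφp z'
    have h1 := psit_le (by positivity : (0:ℝ) < (1-a)/(1+a)) (hrat_lo z z')
      (by rw [div_le_one h1a']; linarith)
    have h2 := mul_le_mul_of_nonneg_left h1 hp.le
    refine le_trans h2 ?_
    have e : φ z * ((φ z' / φ z - 1) ^ 2 / (2 * ((1 - a) / (1 + a)) ^ 2))
        = (φ z - φ z') ^ 2 * ((1 + a) ^ 2 / (2 * (φ z) * (1 - a) ^ 2)) := by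
      field_simp
      ring
    rw [e]
    have hcoef : (1 + a) ^ 2 / (2 * φ z * (1 - a) ^ 2) ≤ (1 + a) ^ 2 / (1 - a) ^ 3 / 2 := by
      rw [div_div]
      apply div_le_div_of_nonneg_left (sq_nonneg _)
        (by positivity : (0:ℝ) < (1 - a) ^ 3 * 2)
      nlinarith [hlo z, pow_pos h1a 2]
    calc (φ z - φ z') ^ 2 * ((1 + a) ^ 2 / (2 * φ z * (1 - a) ^ 2))
        ≤ (φ z - φ z') ^ 2 * ((1 + a) ^ 2 / (1 - a) ^ 3 / 2) :=
          mul_le_mul_of_nonneg_left hcoef (sq_nonneg _)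
      _ = (1 + a) ^ 2 / (1 - a) ^ 3 / 2 * (φ z - φ z') ^ 2 := by ring
  constructor
  · rw [show ((1 - a) ^ 2 / (1 + a) ^ 3) * dirichletForm ν φ M
      = ∑ z : Z, ∑ z' : Z, ((1 - a) ^ 2 / (1 + a) ^ 3 / 2) * (M z z' * ν z * (φ z - φ z') ^ 2) by
        simp only [dirichletForm, Finset.mul_sum]
        apply Finset.sum_congr rfl; intro z _
        apply Finset.sum_congr rfl; intro z' _
        ring]
    apply Finset.sum_le_sum; intro z _
    apply Finset.sum_le_sum; intro z' _
    by_cases h : z = z'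
    · subst h
      rw [div_self (ne_of_gt (hφp z)), Real.log_one]
      simp
    · have hMz := hM.1 z z' h
      calc ((1 - a) ^ 2 / (1 + a) ^ 3 / 2) * (M z z' * ν z * (φ z - φ z') ^ 2)
          = (M z z' * ν z) * (((1 - a) ^ 2 / (1 + a) ^ 3 / 2) * (φ z - φ z') ^ 2) := by ring
        _ ≤ (M z z' * ν z) * (φ z * (φ z' / φ z - 1 - Real.log (φ z' / φ z))) :=
            mul_le_mul_of_nonneg_left (core_lo z z') (mul_nonneg hMz (hν.1 z).le)
        _ = M z z' * ν z * φ z * (φ z' / φ z - 1 - Real.log (φ z' / φ z)) := by ring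
  · rw [show ((1 + a) ^ 2 / (1 - a) ^ 3) * dirichletForm ν φ M
      = ∑ z : Z, ∑ z' : Z, ((1 + a) ^ 2 / (1 - a) ^ 3 / 2) * (M z z' * ν z * (φ z - φ z') ^ 2) by
        simp only [dirichletForm, Finset.mul_sum]
        apply Finset.sum_congr rfl; intro z _
        apply Finset.sum_congr rfl; intro z' _
        ring]
    apply Finset.sum_le_sum; intro z _
    apply Finset.sum_le_sum; intro z' _
    by_cases h : z = z'
    · subst h
      rw [div_self (ne_of_gt (hφp z)), Real.log_one]
      simp
    · have hMz := hM.1 z z' h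
      calc M z z' * ν z * φ z * (φ z' / φ z - 1 - Real.log (φ z' / φ z))
          = (M z z' * ν z) * (φ z * (φ z' / φ z - 1 - Real.log (φ z' / φ z))) := by ring
        _ ≤ (M z z' * ν z) * (((1 + a) ^ 2 / (1 - a) ^ 3 / 2) * (φ z - φ z') ^ 2) :=
            mul_le_mul_of_nonneg_left (core_hi z z') (mul_nonneg hMz (hν.1 z).le)
        _ = ((1 + a) ^ 2 / (1 - a) ^ 3 / 2) * (M z z' * ν z * (φ z - φ z') ^ 2) := by ring

end Bounds

section Sandwich
variable {Z : Type*} [Fintype Z]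

lemma sandwich (ν φ : Z → ℝ) (M : Z → Z → ℝ) (hM : IsGenerator M) (hν : IsPosProb ν)
    (hφ : IsDensity ν φ) {a : ℝ} (ha0 : 0 ≤ a) (ha1 : a < 1) (hbd : ∀ z, |φ z - 1| ≤ a)
    (hV : 0 < varWrt ν φ) :
    2 * ((1 - a) / (1 + a)) ^ 3 * (dirichletForm ν φ M / varWrt ν φ)
      ≤ fisherInfo ν φ M / relEnt ν φ ∧
    fisherInfo ν φ M / relEnt ν φ
      ≤ 2 * ((1 + a) / (1 - a)) ^ 3 * (dirichletForm ν φ M / varWrt ν φ) := by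
  have h1a : (0:ℝ) < 1 - a := by linarith
  have h1a' : (0:ℝ) < 1 + a := by linarith
  obtain ⟨hHlo, hHhi⟩ := relEnt_bounds ν φ hν hφ ha0 ha1 hbd
  obtain ⟨hRlo, hRhi⟩ := fisher_bounds ν φ M hM hν hφ.1 ha0 ha1 hbd
  have hE0 : 0 ≤ dirichletForm ν φ M := dirichlet_nonneg ν φ M hM (fun z => (hν.1 z).le)
  have hH0 : 0 < relEnt ν φ := lt_of_lt_of_le (by positivity) hHlo
  have hR0 : 0 ≤ fisherInfo ν φ M := le_trans (by positivity) hRlo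
  have hVne : varWrt ν φ ≠ 0 := ne_of_gt hV
  constructor
  · have key : 2 * ((1 - a) / (1 + a)) ^ 3 * (dirichletForm ν φ M / varWrt ν φ)
        = (((1 - a) ^ 2 / (1 + a) ^ 3) * dirichletForm ν φ M) / (varWrt ν φ / (2 * (1 - a))) := by
      field_simp
    rw [key]
    exact div_le_div₀ hR0 hRlo hH0 hHhi
  · have key : 2 * ((1 + a) / (1 - a)) ^ 3 * (dirichletForm ν φ M / varWrt ν φ)
        = (((1 + a) ^ 2 / (1 - a) ^ 3) * dirichletForm ν φ M) / (varWrt ν φ / (2 * (1 + a))) := by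
      field_simp
    rw [key]
    exact div_le_div₀ (by positivity) hRhi (by positivity) hHlo


end Sandwich

end LocGPIAux

/-- localized entropy/Fisher ratio characterisation of the
generalised Poincaré constant. -/
theorem gPI_localized_characterisation
    {Z : Type*} [Fintype Z] (hcard : 2 ≤ Fintype.card Z)
    (M : Z → Z → ℝ) (hgen : IsGenerator M) (hirr : IsIrreducibleGen M)
    (ζ : Z → ℝ) (hζ : IsPosProb ζ)
    (ζseq : ℕ → Z → ℝ) (hζseq : ∀ n, IsPosProb (ζseq n))
    (hconv : ∀ z : Z, Tendsto (fun n => ζseq n z) atTop (nhds (ζ z)))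
    (δseq : ℕ → ℝ) (hδpos : ∀ n, 0 < δseq n)
    (hδ : Tendsto δseq atTop (nhds 0)) :
    Tendsto (fun n => sInf { r : ℝ | ∃ φ : Z → ℝ, IsDensity (ζseq n) φ ∧
        0 < wNorm (ζseq n) (fun z => φ z - 1) ∧
        wNorm (ζseq n) (fun z => φ z - 1) < δseq n ∧
        r = fisherInfo (ζseq n) φ M / relEnt (ζseq n) φ })
      atTop (nhds (2 * gPI ζ M)) := by
  classical
  obtain ⟨hζpos, hζsum⟩ := hζ
  have hZne : Nonempty Z := Fintype.card_pos_iff.1 (lt_of_lt_of_le (by norm_num) hcard)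
  -- facts about the Poincaré set
  set P := { r : ℝ | ∃ f : Z → ℝ, Nonconst f ∧ r = dirichletForm ζ f M / varWrt ζ f } with hP
  have hgPI : gPI ζ M = sInf P := rfl
  have hPlb : ∀ r ∈ P, (0:ℝ) ≤ r := by
    rintro r ⟨f, hf, rfl⟩
    exact div_nonneg (dirichlet_nonneg ζ f M hgen (fun z => (hζpos z).le))
      (varWrt_pos ζ f ⟨hζpos, hζsum⟩ hf).le
  have hPne : P.Nonempty := by
    obtain ⟨z₀, z₁, hz⟩ := Fintype.exists_pair_of_one_lt_card (α := Z) (by omega)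
    exact ⟨_, ⟨fun z => if z = z₀ then (1:ℝ) else 0, ⟨z₀, z₁, by simp [Ne.symm hz]⟩, rfl⟩⟩
  have hPbdd : BddBelow P := ⟨0, hPlb⟩
  set α := gPI ζ M with hαdef
  have hα0 : 0 ≤ α := by rw [hgPI]; exact le_csInf hPne hPlb
  have hgPI_le : ∀ f : Z → ℝ, Nonconst f → α ≤ dirichletForm ζ f M / varWrt ζ f := by
    intro f hf
    rw [hgPI]
    exact csInf_le hPbdd ⟨f, hf, rfl⟩
  rw [Metric.tendsto_atTop]
  intro ε hε
  -- near-optimal test function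
  obtain ⟨r₀, hr₀mem, hr₀lt⟩ := exists_lt_of_csInf_lt hPne
    (show sInf P < α + ε / 8 by rw [← hgPI]; linarith)
  obtain ⟨f₀, hf₀, hr₀eq⟩ := hr₀mem
  have hr₀0 : 0 ≤ r₀ := hPlb r₀ ⟨f₀, hf₀, hr₀eq⟩
  -- choose θ
  have hcont1 : Tendsto (fun θ : ℝ => 2 * r₀ * ((1 + θ) / (1 - θ)) ^ 4) (nhds 0)
      (nhds (2 * r₀)) := by
    have h : ContinuousAt (fun θ : ℝ => 2 * r₀ * ((1 + θ) / (1 - θ)) ^ 4) 0 := by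
      apply ContinuousAt.mul continuousAt_const
      apply ContinuousAt.pow
      exact ContinuousAt.div (by fun_prop) (by fun_prop) (by norm_num)
    have h2 := h.tendsto
    convert h2 using 2
    norm_num
  have hcont2 : Tendsto (fun θ : ℝ => 2 * α * ((1 - θ) / (1 + θ)) ^ 4) (nhds 0)
      (nhds (2 * α)) := by
    have h : ContinuousAt (fun θ : ℝ => 2 * α * ((1 - θ) / (1 + θ)) ^ 4) 0 := by
      apply ContinuousAt.mul continuousAt_const
      apply ContinuousAt.pow
      exact ContinuousAt.div (by fun_prop) (by fun_prop) (by norm_num)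
    have h2 := h.tendsto
    convert h2 using 2
    norm_num
  have he1 : ∀ᶠ θ : ℝ in nhds 0, 2 * r₀ * ((1 + θ) / (1 - θ)) ^ 4 < 2 * α + ε :=
    hcont1.eventually_lt_const (by linarith)
  have he2 : ∀ᶠ θ : ℝ in nhds 0, 2 * α - ε < 2 * α * ((1 - θ) / (1 + θ)) ^ 4 :=
    hcont2.eventually_const_lt (by linarith)
  have he3 : ∀ᶠ θ : ℝ in nhds 0, θ < 1 / 2 := by
    filter_upwards [Tendsto.eventually_lt_const (by norm_num : (0:ℝ) < 1 / 2) tendsto_id]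
      with θ h using h
  have hexθ : ∃ θ : ℝ, 0 < θ ∧ θ < 1 / 2 ∧
      2 * r₀ * ((1 + θ) / (1 - θ)) ^ 4 < 2 * α + ε ∧
      2 * α - ε < 2 * α * ((1 - θ) / (1 + θ)) ^ 4 := by
    have hev : ∀ᶠ θ : ℝ in nhdsWithin 0 (Set.Ioi 0),
        (θ < 1 / 2 ∧ 2 * r₀ * ((1 + θ) / (1 - θ)) ^ 4 < 2 * α + ε ∧
          2 * α - ε < 2 * α * ((1 - θ) / (1 + θ)) ^ 4) ∧ θ ∈ Set.Ioi 0 :=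
      (((he3.and (he1.and he2)).filter_mono nhdsWithin_le_nhds).and self_mem_nhdsWithin)
    obtain ⟨θ, ⟨h3, h1, h2⟩, h0⟩ := hev.exists
    exact ⟨θ, h0, h3, h1, h2⟩
  obtain ⟨θ, hθ0, hθhalf, hFθ, hGθ⟩ := hexθ
  have hθ1 : θ < 1 := by linarith
  -- positive lower bound on ζ
  have hune : (Finset.univ : Finset Z).Nonempty := Finset.univ_nonempty
  set c := (Finset.univ.inf' hune ζ) / 2 with hc
  have hcpos : 0 < c := by
    have : 0 < Finset.univ.inf' hune ζ := by
      rw [Finset.lt_inf'_iff]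
      exact fun z _ => hζpos z
    rw [hc]; linarith
  -- eventual conditions
  have hev1 : ∀ᶠ n in atTop, ∀ z : Z,
      (1 - θ) * ζ z ≤ ζseq n z ∧ ζseq n z ≤ (1 + θ) * ζ z := by
    rw [Filter.eventually_all]
    intro z
    have h1 : (1 - θ) * ζ z < ζ z := by nlinarith [hζpos z]
    have h2 : ζ z < (1 + θ) * ζ z := by nlinarith [hζpos z]
    exact (((hconv z).eventually_const_lt h1).and ((hconv z).eventually_lt_const h2)).mono
      (fun n hn => ⟨hn.1.le, hn.2.le⟩)
  have hev2 : ∀ᶠ n in atTop, δseq n < θ * Real.sqrt c :=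
    hδ.eventually_lt_const (by positivity)
  obtain ⟨N, hN⟩ := eventually_atTop.1 (hev1.and hev2)
  refine ⟨N, fun n hn => ?_⟩
  obtain ⟨h1n, h2n⟩ := hN n hn
  set ν := ζseq n with hνdef
  obtain ⟨hνpos, hνsum⟩ := hζseq n
  have hνc : ∀ z, c ≤ ν z := by
    intro z
    have h := (h1n z).1
    have hζinf : Finset.univ.inf' hune ζ ≤ ζ z := Finset.inf'_le ζ (Finset.mem_univ z)
    have hζz := hζpos z
    rw [hc]
    nlinarith
  set S := { r : ℝ | ∃ φ : Z → ℝ, IsDensity ν φ ∧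
      0 < wNorm ν (fun z => φ z - 1) ∧
      wNorm ν (fun z => φ z - 1) < δseq n ∧
      r = fisherInfo ν φ M / relEnt ν φ } with hSdef
  -- lower bound for every element of S
  have hlow : ∀ r ∈ S, 2 * α * ((1 - θ) / (1 + θ)) ^ 4 ≤ r := by
    rintro r ⟨φ, hφdens, hWpos, hWlt, rfl⟩
    have hbd : ∀ z, |φ z - 1| ≤ θ := by
      intro z
      have h1 := abs_le_wNorm ν (fun z => φ z - 1) (fun z => (hνpos z).le) z
      have h2 : Real.sqrt c ≤ Real.sqrt (ν z) := Real.sqrt_le_sqrt (hνc z)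
      have h3 : |φ z - 1| * Real.sqrt c ≤ |φ z - 1| * Real.sqrt (ν z) :=
        mul_le_mul_of_nonneg_left h2 (abs_nonneg _)
      have h4 : |φ z - 1| * Real.sqrt c < θ * Real.sqrt c :=
        lt_of_le_of_lt (le_trans h3 h1) (lt_trans hWlt h2n)
      exact (lt_of_mul_lt_mul_right h4 (Real.sqrt_nonneg c)).le
    have hVeq : varWrt ν φ = wNorm ν (fun z => φ z - 1) ^ 2 := by
      rw [wNorm_sq ν _ (fun z => (hνpos z).le), var_eq_sq_sum ν φ hνsum hφdens.2]
    have hVpos : 0 < varWrt ν φ := by rw [hVeq]; positivity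
    have hsand := (sandwich ν φ M hgen ⟨hνpos, hνsum⟩ hφdens hθ0.le hθ1 hbd hVpos).1
    have hNC : Nonconst φ := by
      by_contra h
      exact absurd (varWrt_zero_of_const ν φ hνsum h) (ne_of_gt hVpos)
    have hvζ : 0 < varWrt ζ φ := varWrt_pos ζ φ ⟨hζpos, hζsum⟩ hNC
    have hEζ : α * varWrt ζ φ ≤ dirichletForm ζ φ M := by
      have h := hgPI_le φ hNC
      rw [le_div_iff₀ hvζ] at h
      linarith
    have hEν : (1 - θ) * dirichletForm ζ φ M ≤ dirichletForm ν φ M := by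
      rw [← dirichlet_scale ζ φ M (1 - θ)]
      exact dirichlet_mono _ ν φ M hgen (fun z => (h1n z).1)
    have hvν : varWrt ν φ ≤ (1 + θ) * varWrt ζ φ := by
      calc varWrt ν φ ≤ ∑ z : Z, (φ z - expec ζ φ) ^ 2 * ν z := varWrt_le_sqdev ν φ hνsum _
        _ ≤ ∑ z : Z, (1 + θ) * ((φ z - expec ζ φ) ^ 2 * ζ z) := by
            apply Finset.sum_le_sum
            intro z _
            have h := mul_le_mul_of_nonneg_left (h1n z).2 (sq_nonneg (φ z - expec ζ φ))
            calc (φ z - expec ζ φ) ^ 2 * ν z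
                ≤ (φ z - expec ζ φ) ^ 2 * ((1 + θ) * ζ z) := h
              _ = (1 + θ) * ((φ z - expec ζ φ) ^ 2 * ζ z) := by ring
        _ = (1 + θ) * ∑ z : Z, (φ z - expec ζ φ) ^ 2 * ζ z := (Finset.mul_sum _ _ _).symm
        _ = (1 + θ) * varWrt ζ φ := by
            rw [sqdev_eq ζ φ hζsum (expec ζ φ)]; simp
    have hratio : (1 - θ) / (1 + θ) * α ≤ dirichletForm ν φ M / varWrt ν φ := by
      rw [le_div_iff₀ hVpos]
      have h1θ : (0:ℝ) < 1 + θ := by linarith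
      have hcoef : 0 ≤ (1 - θ) / (1 + θ) * α :=
        mul_nonneg (div_nonneg (by linarith) (by linarith)) hα0
      calc (1 - θ) / (1 + θ) * α * varWrt ν φ
          ≤ (1 - θ) / (1 + θ) * α * ((1 + θ) * varWrt ζ φ) :=
            mul_le_mul_of_nonneg_left hvν hcoef
        _ = (1 - θ) * (α * varWrt ζ φ) := by field_simp
        _ ≤ (1 - θ) * dirichletForm ζ φ M := mul_le_mul_of_nonneg_left hEζ (by linarith)
        _ ≤ dirichletForm ν φ M := hEν
    calc 2 * α * ((1 - θ) / (1 + θ)) ^ 4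
        = 2 * ((1 - θ) / (1 + θ)) ^ 3 * ((1 - θ) / (1 + θ) * α) := by ring
      _ ≤ 2 * ((1 - θ) / (1 + θ)) ^ 3 * (dirichletForm ν φ M / varWrt ν φ) :=
          mul_le_mul_of_nonneg_left hratio
            (mul_nonneg (by norm_num)
              (pow_nonneg (div_nonneg (by linarith) (by linarith)) 3))
      _ ≤ fisherInfo ν φ M / relEnt ν φ := hsand
  -- construct a witness element of S
  set m := expec ν f₀ with hm
  set g : Z → ℝ := fun z => f₀ z - m with hg
  have hgNC : Nonconst g := by
    obtain ⟨z, z', hzz⟩ := hf₀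
    exact ⟨z, z', fun h => hzz (by simpa [hg] using h)⟩
  have hvgf : 0 < varWrt ν f₀ := varWrt_pos ν f₀ ⟨hνpos, hνsum⟩ hf₀
  set W₀ := wNorm ν g with hW₀def
  have hW₀sq : W₀ ^ 2 = varWrt ν f₀ := by
    rw [hW₀def, wNorm_sq ν g (fun z => (hνpos z).le)]
    have : ∀ z : Z, g z ^ 2 * ν z = (f₀ z - m) ^ 2 * ν z := fun z => by rw [hg]
    rw [Finset.sum_congr rfl (fun z _ => this z), sqdev_eq ν f₀ hνsum m, hm]
    simp
  have hW₀nonneg : 0 ≤ W₀ := Real.sqrt_nonneg _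
  have hW₀ : 0 < W₀ := by
    rcases eq_or_lt_of_le hW₀nonneg with h | h
    · exfalso
      rw [← h] at hW₀sq
      simp at hW₀sq
      linarith
    · exact h
  set B := Finset.univ.sup' hune (fun z => |g z|) with hB
  have hBz : ∀ z, |g z| ≤ B := by
    intro z
    rw [hB]
    exact Finset.le_sup' (fun z => |g z|) (Finset.mem_univ z)
  have hBpos : 0 < B := by
    obtain ⟨z, z', hzz⟩ := hgNC
    rcases eq_or_ne (g z) 0 with h | h
    · have : g z' ≠ 0 := fun h' => hzz (by rw [h, h'])
      exact lt_of_lt_of_le (abs_pos.2 this) (hBz z')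
    · exact lt_of_lt_of_le (abs_pos.2 h) (hBz z)
  set t := min (θ / B) (δseq n / (2 * W₀)) with ht
  have ht0 : 0 < t := lt_min (div_pos hθ0 hBpos) (div_pos (hδpos n) (by positivity))
  set φ : Z → ℝ := fun z => (1 - t * m) + t * f₀ z with hφ
  have hφ1 : ∀ z, φ z - 1 = t * g z := fun z => by rw [hφ, hg]; ring
  have hbd : ∀ z, |φ z - 1| ≤ θ := by
    intro z
    rw [hφ1 z, abs_mul, abs_of_pos ht0]
    calc t * |g z| ≤ (θ / B) * B :=
        mul_le_mul (min_le_left _ _) (hBz z) (abs_nonneg _) (div_pos hθ0 hBpos).le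
      _ = θ := div_mul_cancel₀ θ (ne_of_gt hBpos)
  have hφpos : ∀ z, 0 < φ z := by
    intro z
    have h := (abs_le.1 (hbd z)).1
    linarith
  have hdens : IsDensity ν φ := by
    refine ⟨hφpos, ?_⟩
    rw [hφ, expec_affine ν f₀ hνsum (1 - t * m) t, ← hm]
    ring
  have hWeq : wNorm ν (fun z => φ z - 1) = t * W₀ := by
    rw [show (fun z => φ z - 1) = fun z => t * g z from funext hφ1, wNorm_scale,
      abs_of_pos ht0, hW₀def]
  have hWpos : 0 < wNorm ν (fun z => φ z - 1) := by rw [hWeq]; positivity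
  have hWlt : wNorm ν (fun z => φ z - 1) < δseq n := by
    rw [hWeq]
    calc t * W₀ ≤ (δseq n / (2 * W₀)) * W₀ :=
        mul_le_mul_of_nonneg_right (min_le_right _ _) hW₀nonneg
      _ = δseq n / 2 := by field_simp
      _ < δseq n := by linarith [hδpos n]
  have hmem : fisherInfo ν φ M / relEnt ν φ ∈ S := ⟨φ, hdens, hWpos, hWlt, rfl⟩
  have hVeqφ : varWrt ν φ = wNorm ν (fun z => φ z - 1) ^ 2 := by
    rw [wNorm_sq ν _ (fun z => (hνpos z).le), var_eq_sq_sum ν φ hνsum hdens.2]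
  have hVφ : 0 < varWrt ν φ := by rw [hVeqφ]; positivity
  have hsand2 := (sandwich ν φ M hgen ⟨hνpos, hνsum⟩ hdens hθ0.le hθ1 hbd hVφ).2
  have hEφ : dirichletForm ν φ M = t ^ 2 * dirichletForm ν f₀ M := by
    rw [hφ]; exact dirichlet_affine ν f₀ M (1 - t * m) t
  have hVφeq : varWrt ν φ = t ^ 2 * varWrt ν f₀ := by
    rw [hφ]; exact varWrt_affine ν f₀ hνsum (1 - t * m) t
  have hratio2 : dirichletForm ν φ M / varWrt ν φ = dirichletForm ν f₀ M / varWrt ν f₀ := by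
    rw [hEφ, hVφeq, mul_div_mul_left _ _ (by positivity : (t:ℝ) ^ 2 ≠ 0)]
  have hEν2 : dirichletForm ν f₀ M ≤ (1 + θ) * dirichletForm ζ f₀ M := by
    rw [← dirichlet_scale ζ f₀ M (1 + θ)]
    exact dirichlet_mono ν _ f₀ M hgen (fun z => (h1n z).2)
  have hvζf : 0 < varWrt ζ f₀ := varWrt_pos ζ f₀ ⟨hζpos, hζsum⟩ hf₀
  have hvν2 : (1 - θ) * varWrt ζ f₀ ≤ varWrt ν f₀ := by
    calc (1 - θ) * varWrt ζ f₀
        ≤ (1 - θ) * ∑ z : Z, (f₀ z - m) ^ 2 * ζ z :=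
          mul_le_mul_of_nonneg_left (varWrt_le_sqdev ζ f₀ hζsum m) (by linarith)
      _ = ∑ z : Z, (1 - θ) * ((f₀ z - m) ^ 2 * ζ z) := Finset.mul_sum _ _ _
      _ ≤ ∑ z : Z, (f₀ z - m) ^ 2 * ν z := by
          apply Finset.sum_le_sum
          intro z _
          have h := mul_le_mul_of_nonneg_left (h1n z).1 (sq_nonneg (f₀ z - m))
          calc (1 - θ) * ((f₀ z - m) ^ 2 * ζ z)
              = (f₀ z - m) ^ 2 * ((1 - θ) * ζ z) := by ring
            _ ≤ (f₀ z - m) ^ 2 * ν z := h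
      _ = varWrt ν f₀ := by rw [sqdev_eq ν f₀ hνsum m, hm]; simp
  have hq : dirichletForm ν f₀ M / varWrt ν f₀ ≤ (1 + θ) / (1 - θ) * r₀ := by
    rw [hr₀eq]
    have hEζ0 : 0 ≤ dirichletForm ζ f₀ M :=
      dirichlet_nonneg ζ f₀ M hgen (fun z => (hζpos z).le)
    have h1 : dirichletForm ν f₀ M / varWrt ν f₀
        ≤ ((1 + θ) * dirichletForm ζ f₀ M) / ((1 - θ) * varWrt ζ f₀) :=
      div_le_div₀ (mul_nonneg (by linarith) hEζ0) hEν2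
        (mul_pos (by linarith) hvζf) hvν2
    calc dirichletForm ν f₀ M / varWrt ν f₀
        ≤ ((1 + θ) * dirichletForm ζ f₀ M) / ((1 - θ) * varWrt ζ f₀) := h1
      _ = (1 + θ) / (1 - θ) * (dirichletForm ζ f₀ M / varWrt ζ f₀) :=
          mul_div_mul_comm _ _ _ _
  have hup : fisherInfo ν φ M / relEnt ν φ ≤ 2 * r₀ * ((1 + θ) / (1 - θ)) ^ 4 := by
    have hcoef : (0:ℝ) ≤ 2 * ((1 + θ) / (1 - θ)) ^ 3 :=
      mul_nonneg (by norm_num) (pow_nonneg (div_nonneg (by linarith) (by linarith)) 3)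
    calc fisherInfo ν φ M / relEnt ν φ
        ≤ 2 * ((1 + θ) / (1 - θ)) ^ 3 * (dirichletForm ν φ M / varWrt ν φ) := hsand2
      _ = 2 * ((1 + θ) / (1 - θ)) ^ 3 * (dirichletForm ν f₀ M / varWrt ν f₀) := by
          rw [hratio2]
      _ ≤ 2 * ((1 + θ) / (1 - θ)) ^ 3 * ((1 + θ) / (1 - θ) * r₀) :=
          mul_le_mul_of_nonneg_left hq hcoef
      _ = 2 * r₀ * ((1 + θ) / (1 - θ)) ^ 4 := by ring
  have hSne : S.Nonempty := ⟨_, hmem⟩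
  have hsInf_ge : 2 * α - ε < sInf S := lt_of_lt_of_le hGθ (le_csInf hSne hlow)
  have hsInf_le : sInf S < 2 * α + ε :=
    lt_of_le_of_lt (csInf_le ⟨2 * α * ((1 - θ) / (1 + θ)) ^ 4, hlow⟩ hmem)
      (lt_of_le_of_lt hup hFθ)
  rw [Real.dist_eq, abs_lt]
  constructor <;> linarith
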